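/- Let K_{σ1,σ2} be a complete bipartite fuzzy graph with |X| = 2 and |Y| ≥ 3, where μ_s(x_1) ≤ μ_s(x_2). Then γ_snR(K_{σ1,σ2}) = min{4μ_s(x_1), 2μ_s(x_1) + μ_s(x_2)}. -/

import Mathlib

noncomputable section
open scoped Classical
open Finset

/-- A fuzzy graph on a vertex set `V`. -/
structure FuzzyGraph (V : Type*) where
  σ : V → ℝ
  μ : V → V → ℝ
  σ_nonneg : ∀ v, 0 ≤ σ v
  σ_le_one : ∀ v, σ v ≤ 1
  μ_nonneg : ∀ u v, 0 ≤ μ u v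
  μ_symm : ∀ u v, μ u v = μ v u
  μ_le : ∀ u v, μ u v ≤ min (σ u) (σ v)
  μ_irrefl : ∀ v, μ v v = 0

namespace FuzzyGraph

variable {V : Type*} (G : FuzzyGraph V)

/-- The strength of a walk (given as its list of vertices): the minimum
membership value of its edges (1 for walks without edges). -/
def walkStrength (l : List V) : ℝ :=
  ((l.zip l.tail).map fun p => G.μ p.1 p.2).foldr min 1

/-- `l` is a `u`–`v` walk: it starts at `u`, ends at `v`, and consecutive
vertices are joined by edges of positive membership. -/
def IsWalk (u v : V) (l : List V) : Prop :=
  l.head? = some u ∧ l.getLast? = some v ∧ l.Chain' (fun a b => 0 < G.μ a b)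

/-- `CONN_G(u,v)`: the maximum strength over all `u`–`v` paths. -/
def conn (u v : V) : ℝ :=
  sSup {s | ∃ l : List V, G.IsWalk u v l ∧ 2 ≤ l.length ∧ s = G.walkStrength l}

/-- The edge `(u,v)` is strong. -/
def StrongEdge (u v : V) : Prop :=
  0 < G.μ u v ∧ G.μ u v = G.conn u v

/-- `μ_s(u)`: the minimum membership value among strong edges at `u`
(`0` if `u` has no strong neighbor, via `Real.sInf_empty`). -/
def mus (u : V) : ℝ :=
  sInf {x | ∃ v, G.StrongEdge u v ∧ x = G.μ u v}

/-- The strong neighborhood degree `d_SN(v)`. -/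
def dSN [Fintype V] (v : V) : ℝ :=
  ∑ u ∈ Finset.univ.filter (fun u => G.StrongEdge v u), G.σ u

/-- `D` is a strong dominating set. -/
def IsStrongDomSet (D : Finset V) : Prop :=
  ∀ v, v ∉ D → ∃ u ∈ D, G.StrongEdge v u

/-- The weight of a strong dominating set. -/
def domWeight (D : Finset V) : ℝ := ∑ u ∈ D, G.mus u

/-- The strong domination number `γ_s(G)`. -/
def gammaS [Fintype V] : ℝ :=
  sInf {w | ∃ D : Finset V, G.IsStrongDomSet D ∧ w = G.domWeight D}

/-- `f` is a strong-neighbors Roman dominating function (SNRDF). -/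
def IsSNRDF (f : V → ℕ) : Prop :=
  (∀ v, f v ≤ 2) ∧ ∀ v, f v = 0 → ∃ u, G.StrongEdge v u ∧ f u = 2

/-- The weight of an SNRDF. -/
def snrdfWeight [Fintype V] (f : V → ℕ) : ℝ := ∑ v, (f v : ℝ) * G.mus v

/-- The strong-neighbors Roman domination number `γ_snR(G)`. -/
def gammaSnR [Fintype V] : ℝ :=
  sInf {w | ∃ f : V → ℕ, G.IsSNRDF f ∧ w = G.snrdfWeight f}

/-- The fuzzy subgraph induced by the vertices satisfying `p`. -/
def induce (p : V → Prop) : FuzzyGraph {v // p v} where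
  σ v := G.σ v
  μ u v := G.μ u v
  σ_nonneg v := G.σ_nonneg v
  σ_le_one v := G.σ_le_one v
  μ_nonneg u v := G.μ_nonneg u v
  μ_symm u v := G.μ_symm u v
  μ_le u v := G.μ_le u v
  μ_irrefl v := G.μ_irrefl v

/-- The minimum membership value among the strong edges of `G`. -/
def muMin : ℝ := sInf {x | ∃ u v, G.StrongEdge u v ∧ x = G.μ u v}

/-- The complement of a fuzzy graph. -/
def compl : FuzzyGraph V where
  σ := G.σ
  μ u v := if u = v then 0 else min (G.σ u) (G.σ v) - G.μ u v
  σ_nonneg := G.σ_nonneg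
  σ_le_one := G.σ_le_one
  μ_nonneg u v := by
    by_cases h : u = v
    · simp [h]
    · simp only [if_neg h, sub_nonneg]
      exact G.μ_le u v
  μ_symm u v := by
    by_cases h : u = v
    · simp [h]
    · have h' : ¬ v = u := fun hh => h hh.symm
      simp only [if_neg h, if_neg h', min_comm (G.σ u), G.μ_symm u v]
  μ_le u v := by
    by_cases h : u = v
    · subst h
      simp only [if_pos rfl, le_min_iff]
      exact ⟨G.σ_nonneg u, G.σ_nonneg u⟩
    · simp only [if_neg h]
      have := G.μ_nonneg u v
      linarith
  μ_irrefl v := by simp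

end FuzzyGraph

/-! No walk is stronger than `σ u ∧ σ v`, so in a complete bipartite fuzzy graph every cross
edge is strong, and the strong edges are exactly the cross edges. Together with
`μ_s(x₁) ≤ μ_s(x₂)` this makes `μ_s(x₁)` the least value of `μ_s`; it is attained as
`μ(x₁, y₀) ≥ μ_s(y₀)` for some `y₀ ∈ Y`. The Roman functions `2·[x₁, y₀]` and `2·[x₁] + [x₂]`
give the two upper bounds. Conversely, an SNRDF `f` has weight at least `μ_s(x₁) · ∑ f`; and if
`∑ f ≤ 3`, then, as `|Y| ≥ 3`, no vertex of `X` can have value `0`, and one of them must have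
value `2` (otherwise every vertex of `Y` has value at least `1`), so the weight is at least
`2μ_s(x₁) + μ_s(x₂)`. -/

namespace FuzzyGraph

variable {V : Type*} (G : FuzzyGraph V)

lemma walkStrength_cons_cons (a b : V) (t : List V) :
    G.walkStrength (a :: b :: t) = min (G.μ a b) (G.walkStrength (b :: t)) := by
  simp [walkStrength]

lemma walkStrength_le_sigma_head (a b : V) (t : List V) :
    G.walkStrength (a :: b :: t) ≤ G.σ a := by
  rw [walkStrength_cons_cons]
  exact (min_le_left _ _).trans ((G.μ_le a b).trans (min_le_left _ _))

lemma walkStrength_le_sigma_getLast :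
    ∀ (a b : V) (t : List V) {w : V}, (a :: b :: t).getLast? = some w →
      G.walkStrength (a :: b :: t) ≤ G.σ w
  | a, b, [], w, h => by
    obtain rfl : b = w := by simpa using h
    rw [walkStrength_cons_cons]
    exact (min_le_left _ _).trans ((G.μ_le a b).trans (min_le_right _ _))
  | a, b, c :: t, w, h => by
    rw [walkStrength_cons_cons]
    exact (min_le_right _ _).trans (walkStrength_le_sigma_getLast b c t (by simpa using h))

lemma walkStrength_le_of_isWalk {u v : V} {l : List V} (hl : G.IsWalk u v l)
    (hlen : 2 ≤ l.length) : G.walkStrength l ≤ min (G.σ u) (G.σ v) := by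
  obtain ⟨hhead, hlast, -⟩ := hl
  match l, hlen with
  | a :: b :: t, _ =>
    obtain rfl : a = u := by simpa using hhead
    exact le_min (G.walkStrength_le_sigma_head a b t) (G.walkStrength_le_sigma_getLast a b t hlast)

lemma conn_le_min_sigma (u v : V) : G.conn u v ≤ min (G.σ u) (G.σ v) :=
  Real.sSup_le (by rintro s ⟨l, hl, hlen, rfl⟩; exact G.walkStrength_le_of_isWalk hl hlen)
    (le_min (G.σ_nonneg u) (G.σ_nonneg v))

lemma mu_le_conn {u v : V} (h : 0 < G.μ u v) : G.μ u v ≤ G.conn u v := by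
  refine le_csSup ⟨min (G.σ u) (G.σ v), ?_⟩ ⟨[u, v], ⟨rfl, rfl, List.isChain_pair.mpr h⟩, le_rfl, ?_⟩
  · rintro s ⟨l, hl, hlen, rfl⟩
    exact G.walkStrength_le_of_isWalk hl hlen
  · have hμ : G.μ u v ≤ 1 := (G.μ_le u v).trans ((min_le_left _ _).trans (G.σ_le_one u))
    simp [walkStrength, hμ]

lemma strongEdge_of_mu_eq_min {u v : V} (hpos : 0 < G.μ u v)
    (h : G.μ u v = min (G.σ u) (G.σ v)) : G.StrongEdge u v :=
  ⟨hpos, le_antisymm (G.mu_le_conn hpos) (h ▸ G.conn_le_min_sigma u v)⟩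

lemma mus_nonneg (u : V) : 0 ≤ G.mus u :=
  Real.sInf_nonneg (by rintro x ⟨v, -, rfl⟩; exact G.μ_nonneg u v)

lemma mus_le_mu {u v : V} (h : G.StrongEdge u v) : G.mus u ≤ G.μ u v :=
  csInf_le ⟨0, by rintro x ⟨w, -, rfl⟩; exact G.μ_nonneg u w⟩ ⟨v, h, rfl⟩

lemma mus_le_sigma_right {u v : V} (h : G.StrongEdge u v) : G.mus u ≤ G.σ v :=
  (G.mus_le_mu h).trans ((G.μ_le u v).trans (min_le_right _ _))

lemma mus_le_sigma (u : V) : G.mus u ≤ G.σ u := by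
  by_cases h : ∃ v, G.StrongEdge u v
  · obtain ⟨v, hv⟩ := h
    exact (G.mus_le_mu hv).trans ((G.μ_le u v).trans (min_le_left _ _))
  · have : {x | ∃ v, G.StrongEdge u v ∧ x = G.μ u v} = ∅ :=
      Set.eq_empty_iff_forall_notMem.mpr fun _ ⟨v, hv, _⟩ => h ⟨v, hv⟩
    rw [mus, this, Real.sInf_empty]
    exact G.σ_nonneg u

lemma le_mus {u v : V} {c : ℝ} (huv : G.StrongEdge u v)
    (h : ∀ w, G.StrongEdge u w → c ≤ G.μ u w) : c ≤ G.mus u :=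
  le_csInf ⟨_, v, huv, rfl⟩ (by rintro x ⟨w, hw, rfl⟩; exact h w hw)

lemma exists_strongEdge_mu_eq_mus [Finite V] {u v : V} (huv : G.StrongEdge u v) :
    ∃ w, G.StrongEdge u w ∧ G.μ u w = G.mus u := by
  have hne : {x | ∃ w, G.StrongEdge u w ∧ x = G.μ u w}.Nonempty := ⟨_, v, huv, rfl⟩
  have hfin : {x | ∃ w, G.StrongEdge u w ∧ x = G.μ u w}.Finite :=
    (Set.finite_range (G.μ u)).subset (by rintro x ⟨w, -, rfl⟩; exact ⟨w, rfl⟩)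
  obtain ⟨w, hw, hμ⟩ := hne.csInf_mem hfin
  exact ⟨w, hw, hμ.symm⟩

def romanFun (D E : Finset V) (v : V) : ℕ :=
  if v ∈ D then 2 else if v ∈ E then 1 else 0

lemma isSNRDF_romanFun {D E : Finset V}
    (hD : ∀ v, v ∉ D → v ∉ E → ∃ u ∈ D, G.StrongEdge v u) : G.IsSNRDF (romanFun D E) := by
  refine ⟨fun v => by unfold romanFun; split_ifs <;> omega, fun v hv => ?_⟩
  have hvD : v ∉ D := fun h => by simp [romanFun, h] at hv
  have hvE : v ∉ E := fun h => by simp [romanFun, hvD, h] at hv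
  obtain ⟨u, hu, huv⟩ := hD v hvD hvE
  exact ⟨u, huv, if_pos hu⟩

section Roman

variable [Fintype V]

lemma snrdfWeight_nonneg (f : V → ℕ) : 0 ≤ G.snrdfWeight f :=
  sum_nonneg fun v _ => mul_nonneg (Nat.cast_nonneg _) (G.mus_nonneg v)

lemma gammaSnR_le {f : V → ℕ} (hf : G.IsSNRDF f) : G.gammaSnR ≤ G.snrdfWeight f :=
  csInf_le ⟨0, by rintro w ⟨g, -, rfl⟩; exact G.snrdfWeight_nonneg g⟩ ⟨f, hf, rfl⟩

lemma le_gammaSnR {c : ℝ} (h : ∀ f, G.IsSNRDF f → c ≤ G.snrdfWeight f) : c ≤ G.gammaSnR :=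
  le_csInf ⟨_, fun _ => 2, ⟨fun _ => le_rfl, fun _ h => absurd h two_ne_zero⟩, rfl⟩
    (by rintro w ⟨f, hf, rfl⟩; exact h f hf)

lemma sum_le_snrdfWeight (f : V → ℕ) (s : Finset V) :
    ∑ v ∈ s, (f v : ℝ) * G.mus v ≤ G.snrdfWeight f :=
  sum_le_sum_of_subset_of_nonneg (subset_univ s)
    fun v _ _ => mul_nonneg (Nat.cast_nonneg _) (G.mus_nonneg v)

lemma sum_mul_le_snrdfWeight (f : V → ℕ) {a : ℝ} (ha : ∀ v, a ≤ G.mus v) :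
    ((∑ v, f v : ℕ) : ℝ) * a ≤ G.snrdfWeight f := by
  push_cast
  rw [sum_mul]
  exact sum_le_sum fun v _ => mul_le_mul_of_nonneg_left (ha v) (Nat.cast_nonneg _)

lemma snrdfWeight_romanFun {D E : Finset V} (hDE : Disjoint D E) :
    G.snrdfWeight (romanFun D E) = 2 * ∑ v ∈ D, G.mus v + ∑ v ∈ E, G.mus v := by
  have hterm : ∀ v, (romanFun D E v : ℝ) * G.mus v
      = (if v ∈ D then 2 * G.mus v else 0) + (if v ∈ E then G.mus v else 0) := by
    intro v
    by_cases hD : v ∈ D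
    · simp [romanFun, hD, disjoint_left.mp hDE hD]
    · by_cases hE : v ∈ E <;> simp [romanFun, hD, hE]
  simp only [snrdfWeight, hterm, sum_add_distrib, sum_ite_mem, univ_inter, mul_sum]

lemma gammaSnR_le_romanFun {D E : Finset V} (hDE : Disjoint D E)
    (hD : ∀ v, v ∉ D → v ∉ E → ∃ u ∈ D, G.StrongEdge v u) :
    G.gammaSnR ≤ 2 * ∑ v ∈ D, G.mus v + ∑ v ∈ E, G.mus v :=
  G.snrdfWeight_romanFun hDE ▸ G.gammaSnR_le (G.isSNRDF_romanFun hD)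

end Roman

section CompleteBipartite

variable {G} {side : V → Bool}

lemma strongEdge_iff_side_ne (hbip : ∀ u v, side u ≠ side v → G.μ u v = min (G.σ u) (G.σ v))
    (hin : ∀ u v, side u = side v → G.μ u v = 0) (hσ : ∀ v, 0 < G.σ v) {u v : V} :
    G.StrongEdge u v ↔ side u ≠ side v := by
  refine ⟨fun h hs => (hin u v hs ▸ h.1).false, fun hs => ?_⟩
  exact G.strongEdge_of_mu_eq_min (hbip u v hs ▸ lt_min (hσ u) (hσ v)) (hbip u v hs)

lemma sum_eq_add_add_sum_side_false [Fintype V] {x1 x2 : V} (hne : x1 ≠ x2)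
    (hX : ∀ v, side v = true ↔ v = x1 ∨ v = x2) (f : V → ℕ) :
    ∑ v, f v = f x1 + f x2 + ∑ y ∈ univ.filter (fun v => side v = false), f y := by
  have hXfin : univ.filter (fun v => side v = true) = {x1, x2} := by ext v; simp [hX]
  rw [← sum_filter_add_sum_filter_not univ (fun v => side v = true), hXfin, sum_pair hne]
  simp

variable (hstrong : ∀ u v, G.StrongEdge u v ↔ side u ≠ side v)
include hstrong

lemma side_eq_not_of_strongEdge {u v : V} (h : G.StrongEdge u v) : side v = !side u :=
  Bool.eq_not_iff.2 ((hstrong u v).1 h).symm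

lemma mus_le_mus_of_side_false (hbip : ∀ u v, side u ≠ side v → G.μ u v = min (G.σ u) (G.σ v))
    {x1 x2 : V} (hX : ∀ v, side v = true ↔ v = x1 ∨ v = x2) (hmu : G.mus x1 ≤ G.mus x2)
    {y : V} (hy : side y = false) : G.mus x1 ≤ G.mus y := by
  have hx1 : side x1 = true := (hX x1).2 (Or.inl rfl)
  refine G.le_mus ((hstrong y x1).2 (by simp [hy, hx1])) fun u hu => ?_
  have hu : side u = true := by simpa [hy] using side_eq_not_of_strongEdge hstrong hu
  rw [hbip y u (by simp [hy, hu])]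
  refine le_min (G.mus_le_sigma_right ((hstrong x1 y).2 (by simp [hy, hx1]))) ?_
  rcases (hX u).1 hu with rfl | rfl
  exacts [G.mus_le_sigma u, hmu.trans (G.mus_le_sigma u)]

lemma exists_side_false_mus_le [Finite V] {x y : V} (hx : side x = true) (hy : side y = false) :
    ∃ y₀, side y₀ = false ∧ G.mus y₀ ≤ G.mus x := by
  obtain ⟨y₀, hxy₀, hμ⟩ := G.exists_strongEdge_mu_eq_mus ((hstrong x y).2 (by simp [hx, hy]))
  have hy₀ : side y₀ = false := by simpa [hx] using side_eq_not_of_strongEdge hstrong hxy₀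
  refine ⟨y₀, hy₀, ?_⟩
  calc G.mus y₀ ≤ G.μ y₀ x := G.mus_le_mu ((hstrong y₀ x).2 (by simp [hx, hy₀]))
    _ = G.mus x := by rw [G.μ_symm, hμ]

lemma four_le_sum_or_of_isSNRDF [Fintype V] {x1 x2 : V} (hne : x1 ≠ x2)
    (hX : ∀ v, side v = true ↔ v = x1 ∨ v = x2)
    (hY : 3 ≤ (univ.filter fun v => side v = false).card) {f : V → ℕ} (hf : G.IsSNRDF f) :
    4 ≤ ∑ v, f v ∨ 1 ≤ f x1 ∧ 1 ≤ f x2 ∧ 3 ≤ f x1 + f x2 := by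
  set Y := univ.filter fun v => side v = false
  have hsum : ∑ v, f v = f x1 + f x2 + ∑ y ∈ Y, f y := sum_eq_add_add_sum_side_false hne hX f
  have htwo : f x1 = 0 ∨ f x2 = 0 → ∃ y ∈ Y, f y = 2 := by
    rintro h
    obtain ⟨x, hx, hfx⟩ : ∃ x, side x = true ∧ f x = 0 := by
      rcases h with h | h
      exacts [⟨x1, (hX x1).2 (Or.inl rfl), h⟩, ⟨x2, (hX x2).2 (Or.inr rfl), h⟩]
    obtain ⟨y, hxy, hfy⟩ := hf.2 x hfx
    exact ⟨y, by simpa [Y, hx] using side_eq_not_of_strongEdge hstrong hxy, hfy⟩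
  have hone : f x1 ≠ 2 → f x2 ≠ 2 → ∀ y ∈ Y, 1 ≤ f y := by
    intro h1 h2 y hy
    by_contra hfy
    obtain ⟨u, hyu, hfu⟩ := hf.2 y (by omega)
    have hu : side u = true := by
      simpa [(mem_filter.1 hy).2] using side_eq_not_of_strongEdge hstrong hyu
    rcases (hX u).1 hu with rfl | rfl <;> contradiction
  have hcard : (∀ y ∈ Y, 1 ≤ f y) → Y.card ≤ ∑ y ∈ Y, f y := fun h => by
    simpa using card_nsmul_le_sum Y f 1 h
  have hf1 := hf.1 x1
  have hf2 := hf.1 x2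
  by_cases hz : f x1 = 0 ∨ f x2 = 0
  · left
    obtain ⟨y, hy, hfy⟩ := htwo hz
    by_cases h2 : f x1 = 2 ∨ f x2 = 2
    · have := single_le_sum (fun _ _ => Nat.zero_le _) hy (f := f)
      omega
    · have := sum_lt_sum (hone (by omega) (by omega)) ⟨y, hy, by omega⟩
      simp only [sum_const, smul_eq_mul, mul_one] at this
      omega
  · by_cases h2 : f x1 = 2 ∨ f x2 = 2
    · right; omega
    · have := hcard (hone (by omega) (by omega))
      left; omega

variable [Fintype V] {x1 x2 : V} (hX : ∀ v, side v = true ↔ v = x1 ∨ v = x2)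
include hX

lemma gammaSnR_le_two_mul_add (hne : x1 ≠ x2) : G.gammaSnR ≤ 2 * G.mus x1 + G.mus x2 := by
  have hdom : ∀ v, v ∉ ({x1} : Finset V) → v ∉ ({x2} : Finset V) →
      ∃ u ∈ ({x1} : Finset V), G.StrongEdge v u := by
    intro v hv1 hv2
    have hv : side v = false := by
      rw [← Bool.not_eq_true, hX]; simpa using And.intro hv1 hv2
    exact ⟨x1, mem_singleton_self x1, (hstrong v x1).2 (by simp [hv, hX])⟩
  simpa using G.gammaSnR_le_romanFun (disjoint_singleton.2 hne) hdom

lemma gammaSnR_le_four_mul {y : V} (hy : side y = false) : G.gammaSnR ≤ 4 * G.mus x1 := by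
  have hx1 : side x1 = true := (hX x1).2 (Or.inl rfl)
  obtain ⟨y₀, hy₀, hy₀le⟩ := exists_side_false_mus_le hstrong hx1 hy
  have hdom : ∀ v, v ∉ ({x1, y₀} : Finset V) → v ∉ (∅ : Finset V) →
      ∃ u ∈ ({x1, y₀} : Finset V), G.StrongEdge v u := by
    intro v _ _
    cases hv : side v
    · exact ⟨x1, by simp, (hstrong v x1).2 (by simp [hv, hx1])⟩
    · exact ⟨y₀, by simp, (hstrong v y₀).2 (by simp [hv, hy₀])⟩
  have hne : x1 ≠ y₀ := by rintro rfl; simp [hx1] at hy₀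
  calc G.gammaSnR ≤ 2 * (G.mus x1 + G.mus y₀) := by
        simpa [sum_pair hne] using G.gammaSnR_le_romanFun (disjoint_empty_right _) hdom
    _ ≤ 4 * G.mus x1 := by linarith

lemma min_le_snrdfWeight (hne : x1 ≠ x2) (hY : 3 ≤ (univ.filter fun v => side v = false).card)
    (hmin : ∀ v, G.mus x1 ≤ G.mus v) {f : V → ℕ} (hf : G.IsSNRDF f) :
    min (4 * G.mus x1) (2 * G.mus x1 + G.mus x2) ≤ G.snrdfWeight f := by
  rcases four_le_sum_or_of_isSNRDF hstrong hne hX hY hf with h4 | ⟨h1, h2, h3⟩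
  · calc min (4 * G.mus x1) (2 * G.mus x1 + G.mus x2) ≤ 4 * G.mus x1 := min_le_left _ _
      _ ≤ ((∑ v, f v : ℕ) : ℝ) * G.mus x1 := by
          gcongr
          · exact G.mus_nonneg x1
          · exact_mod_cast h4
      _ ≤ G.snrdfWeight f := G.sum_mul_le_snrdfWeight f hmin
  · have ha := G.mus_nonneg x1
    have hab := hmin x2
    have h1' : (1 : ℝ) ≤ f x1 := by exact_mod_cast h1
    have h2' : (1 : ℝ) ≤ f x2 := by exact_mod_cast h2
    have h3' : (3 : ℝ) ≤ f x1 + f x2 := by exact_mod_cast h3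
    calc min (4 * G.mus x1) (2 * G.mus x1 + G.mus x2) ≤ 2 * G.mus x1 + G.mus x2 :=
          min_le_right _ _
      _ ≤ f x1 * G.mus x1 + f x2 * G.mus x2 := by
          nlinarith [mul_nonneg (sub_nonneg.2 h3') ha, mul_nonneg (sub_nonneg.2 h2') (sub_nonneg.2 hab)]
      _ = ∑ v ∈ {x1, x2}, (f v : ℝ) * G.mus v := by rw [sum_pair hne]
      _ ≤ G.snrdfWeight f := G.sum_le_snrdfWeight f _

end CompleteBipartite

end FuzzyGraph

/-- complete bipartite fuzzy graph with `|X| = 2`, `|Y| ≥ 3`: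
`γ_snR = min{4μ_s(x₁), 2μ_s(x₁) + μ_s(x₂)}`. -/
theorem gammaSnR_complete_bipartite_two {V : Type*} [Fintype V]
    (G : FuzzyGraph V) (side : V → Bool)
    (hbip : ∀ u v : V, side u ≠ side v → G.μ u v = min (G.σ u) (G.σ v))
    (hin : ∀ u v : V, side u = side v → G.μ u v = 0)
    (hσ : ∀ v, 0 < G.σ v)
    (x1 x2 : V) (hne : x1 ≠ x2)
    (hX : ∀ v : V, side v = true ↔ (v = x1 ∨ v = x2))
    (hmu : G.mus x1 ≤ G.mus x2)
    (hcardY : 3 ≤ (Finset.univ.filter fun v : V => side v = false).card) :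
    G.gammaSnR = min (4 * G.mus x1) (2 * G.mus x1 + G.mus x2) := by
  have hstrong : ∀ u v, G.StrongEdge u v ↔ side u ≠ side v :=
    fun u v => FuzzyGraph.strongEdge_iff_side_ne hbip hin hσ
  have hmin : ∀ v, G.mus x1 ≤ G.mus v := by
    intro v
    cases hv : side v
    · exact FuzzyGraph.mus_le_mus_of_side_false hstrong hbip hX hmu hv
    · rcases (hX v).1 hv with rfl | rfl
      exacts [le_rfl, hmu]
  obtain ⟨y, hy⟩ := card_pos.1 (by omega : 0 < (univ.filter fun v : V => side v = false).card)
  refine le_antisymm (le_min ?_ ?_) (G.le_gammaSnR fun f hf => ?_)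
  · exact FuzzyGraph.gammaSnR_le_four_mul hstrong hX (mem_filter.1 hy).2
  · exact FuzzyGraph.gammaSnR_le_two_mul_add hstrong hX hne
  · exact FuzzyGraph.min_le_snrdfWeight hstrong hX hne hcardY hmin hf
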